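/- Assume n ≥ 2 and N ≥ 2, and let α_λ ∈ ℂ be given for every partition λ ∈ P_ℓ° and every ℓ with 2 ≤ ℓ ≤ N. Define α_{1^ℓ} ∈ ℂ recursively for ℓ = 2, …, N by α_{1^ℓ} := − Σ_{j=2}^{ℓ} Σ_{λ ∈ P_j°} α_λ · a(λ, ℓ − j). Then one has the identity Σ_{ℓ=2}^{N} Σ_{λ ∈ P_ℓ} α_λ f_λ = Σ_{ℓ=2}^{N} Σ_{λ ∈ P_ℓ°} α_λ F*_{λ, N+1−ℓ} in ℂ⟦t⟧ (no hypotheses on the higher coefficients of the f_i are needed). -/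

import Mathlib

/-!
Unrolling the recursion, `F*_{λ,N+1−ℓ} = f_λ − Σ_{m=ℓ}^{N} a(λ, m−ℓ) f₁^m` for `λ ⊢ ℓ`.
Summing against `α_λ` over `λ ∈ P_ℓ°` and exchanging the sums over `ℓ` and `m`, the
correction terms collect into `Σ_m (Σ_{ℓ ≤ m} Σ_λ α_λ a(λ, m−ℓ)) f₁^m = −Σ_m α_{1^m} f₁^m`,
which is exactly the contribution of the partitions `1^m` on the left-hand side.
-/

open scoped Classical

/-- `FstarM f λ r` is the series `F*_{λ,r}` for a partition `λ` given as a multiset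
of parts: `F*_{λ,0} = f_λ` (the product of `f_i` over the parts `i` of `λ`) and
`F*_{λ,r} = F*_{λ,r−1} − a(λ,r−1)·f₁^{i_λ+r−1}`, where `a(λ,r)` is the coefficient
of `t^{2(i_λ+r)}` in `F*_{λ,r}`. -/
noncomputable def FstarM (f : ℕ → PowerSeries ℂ) (lam : Multiset ℕ) : ℕ → PowerSeries ℂ
  | 0 => (lam.map f).prod
  | r + 1 =>
      FstarM f lam r -
        PowerSeries.C (R := ℂ) (PowerSeries.coeff (R := ℂ) (2 * (lam.sum + r)) (FstarM f lam r)) *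
          f 1 ^ (lam.sum + r)

open Finset PowerSeries

theorem sum_Icc_sum_add_eq_sum_Icc_sum_sub {R : Type*} [CommRing R] {ι : ℕ → Type*}
    (a N : ℕ) (S : ∀ ℓ, Finset (ι ℓ)) (α b : ∀ ℓ, ι ℓ → R) (c : ∀ ℓ, ι ℓ → ℕ → R)
    (β : ℕ → R) (g : R)
    (hβ : ∀ m ∈ Icc a N, β m = -∑ ℓ ∈ Icc a m, ∑ p ∈ S ℓ, α ℓ p * c ℓ p m) :
    ∑ ℓ ∈ Icc a N, (∑ p ∈ S ℓ, α ℓ p * b ℓ p + β ℓ * g ^ ℓ) =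
      ∑ ℓ ∈ Icc a N, ∑ p ∈ S ℓ, α ℓ p * (b ℓ p - ∑ m ∈ Icc ℓ N, c ℓ p m * g ^ m) := by
  have exchange : ∑ ℓ ∈ Icc a N, ∑ p ∈ S ℓ, ∑ m ∈ Icc ℓ N, α ℓ p * (c ℓ p m * g ^ m) =
      ∑ m ∈ Icc a N, ∑ ℓ ∈ Icc a m, ∑ p ∈ S ℓ, α ℓ p * (c ℓ p m * g ^ m) := by
    rw [sum_congr rfl fun ℓ _ => sum_comm]
    exact sum_comm' fun ℓ m => by simp only [mem_Icc]; omega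
  have corrections : ∑ m ∈ Icc a N, β m * g ^ m =
      -∑ ℓ ∈ Icc a N, ∑ p ∈ S ℓ, ∑ m ∈ Icc ℓ N, α ℓ p * (c ℓ p m * g ^ m) := by
    rw [exchange, ← sum_neg_distrib]
    refine sum_congr rfl fun m hm => ?_
    simp only [hβ m hm, neg_mul, sum_mul, mul_assoc]
  rw [sum_add_distrib, corrections, ← sub_eq_add_neg, ← sum_sub_distrib]
  refine sum_congr rfl fun ℓ _ => ?_
  rw [← sum_sub_distrib]
  simp only [mul_sub, mul_sum]

theorem FstarM_eq_sub_sum_range (f : ℕ → PowerSeries ℂ) (lam : Multiset ℕ) (r : ℕ) :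
    FstarM f lam r = (lam.map f).prod -
      ∑ k ∈ range r, C (coeff (2 * (lam.sum + k)) (FstarM f lam k)) * f 1 ^ (lam.sum + k) := by
  induction r with
  | zero => simp [FstarM]
  | succ r ih => rw [FstarM, sum_range_succ, ih]; ring

theorem FstarM_eq_sub_sum_Icc (f : ℕ → PowerSeries ℂ) {ℓ : ℕ} (p : ℓ.Partition) (N : ℕ) :
    FstarM f p.parts (N + 1 - ℓ) = (p.parts.map f).prod -
      ∑ m ∈ Icc ℓ N, C (coeff (2 * m) (FstarM f p.parts (m - ℓ))) * f 1 ^ m := by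
  rw [FstarM_eq_sub_sum_range, ← Ico_add_one_right_eq_Icc, sum_Ico_eq_sum_range, p.parts_sum]
  simp only [Nat.add_sub_cancel_left]

theorem sum_filter_parts_le_eq_add_replicate_one {M : Type*} [AddCommMonoid M] {n : ℕ}
    (hn : 1 ≤ n) (ℓ : ℕ) (g : Multiset ℕ → M) :
    ∑ p ∈ univ.filter (fun p : ℓ.Partition => ∀ k ∈ p.parts, k ≤ n), g p.parts =
      ∑ p ∈ univ.filter (fun p : ℓ.Partition =>
          (∀ k ∈ p.parts, k ≤ n) ∧ p.parts ≠ Multiset.replicate ℓ 1), g p.parts +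
        g (Multiset.replicate ℓ 1) := by
  let ones : ℓ.Partition :=
    ⟨Multiset.replicate ℓ 1, fun h => by simp [Multiset.eq_of_mem_replicate h], by simp⟩
  have filter_eq_ones : univ.filter (fun p : ℓ.Partition =>
      (∀ k ∈ p.parts, k ≤ n) ∧ ¬p.parts ≠ Multiset.replicate ℓ 1) = {ones} := by
    ext p
    simp only [mem_filter, mem_univ, true_and, not_not, mem_singleton]
    refine ⟨fun h => Nat.Partition.ext h.2, ?_⟩
    rintro rfl
    exact ⟨fun k hk => (Multiset.eq_of_mem_replicate hk).trans_le hn, rfl⟩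
  rw [← sum_filter_add_sum_filter_not _ fun p => p.parts ≠ Multiset.replicate ℓ 1,
    filter_filter, filter_filter, filter_eq_ones, sum_singleton]

theorem stmt_14_general (n N : ℕ) (hn : 2 ≤ n) (f : ℕ → PowerSeries ℂ)
    (α : Multiset ℕ → ℂ)
    (hα : ∀ ℓ ∈ Finset.Icc 2 N,
      α (Multiset.replicate ℓ 1) =
        - ∑ j ∈ Finset.Icc 2 ℓ,
            ∑ p ∈ Finset.univ.filter
              (fun p : Nat.Partition j =>
                (∀ k ∈ p.parts, k ≤ n) ∧ p.parts ≠ Multiset.replicate j 1),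
              α p.parts * PowerSeries.coeff (R := ℂ) (2 * ℓ) (FstarM f p.parts (ℓ - j))) :
    ∑ ℓ ∈ Finset.Icc 2 N,
        ∑ p ∈ Finset.univ.filter (fun p : Nat.Partition ℓ => ∀ k ∈ p.parts, k ≤ n),
          PowerSeries.C (R := ℂ) (α p.parts) * (p.parts.map f).prod =
      ∑ ℓ ∈ Finset.Icc 2 N,
        ∑ p ∈ Finset.univ.filter
            (fun p : Nat.Partition ℓ =>
              (∀ k ∈ p.parts, k ≤ n) ∧ p.parts ≠ Multiset.replicate ℓ 1),
          PowerSeries.C (R := ℂ) (α p.parts) * FstarM f p.parts (N + 1 - ℓ) := by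
  rw [sum_congr rfl fun ℓ _ => sum_filter_parts_le_eq_add_replicate_one (by omega) ℓ
    fun parts => C (α parts) * (parts.map f).prod]
  simp only [Multiset.map_replicate, Multiset.prod_replicate, FstarM_eq_sub_sum_Icc]
  exact sum_Icc_sum_add_eq_sum_Icc_sum_sub (ι := Nat.Partition) 2 N
    (fun ℓ => univ.filter fun p : ℓ.Partition =>
      (∀ k ∈ p.parts, k ≤ n) ∧ p.parts ≠ Multiset.replicate ℓ 1)
    (fun _ p => C (α p.parts)) (fun _ p => (p.parts.map f).prod)
    (fun ℓ p m => C (coeff (2 * m) (FstarM f p.parts (m - ℓ))))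
    (fun m => C (α (Multiset.replicate m 1))) (f 1)
    fun m hm => by simp only [hα m hm, map_neg, map_sum, map_mul]

/-- with `n ≥ 2`, `N ≥ 2` and coefficients `α_λ ∈ ℂ` given for
`λ ∈ P_ℓ°` (`2 ≤ ℓ ≤ N`), if the coefficients `α_{1^ℓ}` are chosen recursively by
`α_{1^ℓ} = − Σ_{j=2}^{ℓ} Σ_{λ ∈ P_j°} α_λ · a(λ, ℓ−j)`, then
`Σ_{ℓ=2}^{N} Σ_{λ ∈ P_ℓ} α_λ f_λ = Σ_{ℓ=2}^{N} Σ_{λ ∈ P_ℓ°} α_λ F*_{λ, N+1−ℓ}`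
in `ℂ⟦t⟧`. Here `P_ℓ` is the set of partitions of `ℓ` with all parts in `{1,…,n}`
and `P_ℓ° = P_ℓ \ {1^ℓ}`. -/
theorem stmt_14 (n N : ℕ) (hn : 2 ≤ n) (hN : 2 ≤ N) (f : ℕ → PowerSeries ℂ)
    (hlead : ∀ i, 1 ≤ i → i ≤ n → PowerSeries.coeff (R := ℂ) (2 * i) (f i) = 1)
    (hlow : ∀ i, 1 ≤ i → i ≤ n → ∀ m, m < 2 * i → PowerSeries.coeff (R := ℂ) m (f i) = 0)
    (α : Multiset ℕ → ℂ)
    (hα : ∀ ℓ ∈ Finset.Icc 2 N,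
      α (Multiset.replicate ℓ 1) =
        - ∑ j ∈ Finset.Icc 2 ℓ,
            ∑ p ∈ Finset.univ.filter
              (fun p : Nat.Partition j =>
                (∀ k ∈ p.parts, k ≤ n) ∧ p.parts ≠ Multiset.replicate j 1),
              α p.parts * PowerSeries.coeff (R := ℂ) (2 * ℓ) (FstarM f p.parts (ℓ - j))) :
    ∑ ℓ ∈ Finset.Icc 2 N,
        ∑ p ∈ Finset.univ.filter (fun p : Nat.Partition ℓ => ∀ k ∈ p.parts, k ≤ n),
          PowerSeries.C (R := ℂ) (α p.parts) * (p.parts.map f).prod =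
      ∑ ℓ ∈ Finset.Icc 2 N,
        ∑ p ∈ Finset.univ.filter
            (fun p : Nat.Partition ℓ =>
              (∀ k ∈ p.parts, k ≤ n) ∧ p.parts ≠ Multiset.replicate ℓ 1),
          PowerSeries.C (R := ℂ) (α p.parts) * FstarM f p.parts (N + 1 - ℓ) :=
  stmt_14_general n N hn f α hα
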